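/- arXiv:2109.04365 — 2 statements merged into one kernel-verified Lean document; each statement's English description precedes it below -/
import Mathlib

section
/- Let d ≥ 1 and m ≥ 2d - 1. Let B₀ ∈ ℂ^{(2d-1)×d} be the matrix whose first row is e₁ᵀ, whose rows 2,…,d are e₁ᵀ + e_kᵀ for k = 2,…,d, and whose rows d+1,…,2d-1 are e₁ᵀ + i·e_kᵀ for k = 2,…,d; extend to B ∈ ℂ^{m×d} by appending rows equal to e₁ᵀ. Then sign(B e₁) is the all-ones vector, and for any y ∈ ℂ^d with sign(By) = sign(B e₁), one has y = y₁ · e₁ with y₁ > 0. Hence e₁ ∈ W_B and Be₁ has no zero entry. -/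
noncomputable def csign (z : ℂ) : ℂ := if z = 0 then 0 else z / ((‖z‖ : ℝ) : ℂ)

def Wset {m d : ℕ} (B : Matrix (Fin m) (Fin d) ℂ) : Set (Fin d → ℂ) :=
  {x | ∀ y : Fin d → ℂ,
    (∀ j, csign (B.mulVec y j) = csign (B.mulVec x j)) →
      ∃ t : ℝ, 0 < t ∧ x = fun k => (t : ℂ) * y k}

/-! Since `B e₁` is the all-ones vector, `sign (B y) = sign (B e₁)` means every entry of `B y`
is a positive real. Row 1 then makes `y₁` a positive real, after which the row `e₁ + e_k` forces
`Im y_k = 0` and the row `e₁ + i e_k` forces `Re y_k = 0`; hence `y = y₁ e₁`. -/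

open Matrix Complex

lemma csign_eq_one_iff {z : ℂ} : csign z = 1 ↔ 0 < z.re ∧ z.im = 0 := by
  unfold csign
  by_cases hz : z = 0
  · simp [hz]
  have hnorm : ((‖z‖ : ℝ) : ℂ) ≠ 0 := by simpa using hz
  rw [if_neg hz, div_eq_one_iff_eq hnorm]
  constructor
  · intro h
    rw [h]
    simpa using hz
  · rintro ⟨hre, him⟩
    rw [← re_add_im z, him, ofReal_zero, zero_mul, add_zero, norm_real, Real.norm_of_nonneg hre.le]

lemma mem_Wset_of_forall_eq_ofReal_mul {m d : ℕ} {B : Matrix (Fin m) (Fin d) ℂ} {x : Fin d → ℂ}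
    (h : ∀ y : Fin d → ℂ, (∀ j, csign ((B *ᵥ y) j) = csign ((B *ᵥ x) j)) →
      ∃ r : ℝ, 0 < r ∧ y = fun k => (r : ℂ) * x k) :
    x ∈ Wset B := by
  intro y hy
  obtain ⟨r, hr, rfl⟩ := h y hy
  refine ⟨r⁻¹, inv_pos.mpr hr, funext fun k => ?_⟩
  rw [← mul_assoc, ← ofReal_mul, inv_mul_cancel₀ hr.ne', ofReal_one, one_mul]

/-- Rows are indexed from `0`: row `0` is `e₁ᵀ`, row `k ∈ [1, d-1]` is `e₁ᵀ + e_{k+1}ᵀ`,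
row `j ∈ [d, 2d-2]` is `e₁ᵀ + i e_{j-d+2}ᵀ`, and all further rows are `e₁ᵀ`. -/
def signRecoveryMatrix (d m : ℕ) : Matrix (Fin m) (Fin d) ℂ :=
  Matrix.of fun j k =>
    (if k.val = 0 then 1 else 0)
      + (if 1 ≤ j.val ∧ j.val ≤ d - 1 ∧ k.val = j.val then 1 else 0)
      + (if d ≤ j.val ∧ j.val ≤ 2 * d - 2 ∧ k.val = j.val - d + 1 then I else 0)

namespace signRecoveryMatrix

variable {d m : ℕ} (hd : 0 < d)

lemma apply_col_zero (j : Fin m) : signRecoveryMatrix d m j ⟨0, hd⟩ = 1 := by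
  simp [signRecoveryMatrix]
  omega

lemma row_zero (hm : 0 < m) : signRecoveryMatrix d m ⟨0, hm⟩ = Pi.single ⟨0, hd⟩ 1 := by
  ext k
  simp [signRecoveryMatrix, Pi.single_apply, Fin.ext_iff]
  omega

lemma row_real {k : Fin d} (hk : k.val ≠ 0) (hm : 2 * d - 1 ≤ m) :
    signRecoveryMatrix d m ⟨k, by omega⟩ = Pi.single ⟨0, hd⟩ 1 + Pi.single k 1 := by
  ext l
  simp [signRecoveryMatrix, Pi.single_apply, Fin.ext_iff]
  split_ifs <;> simp <;> omega

lemma row_imag {k : Fin d} (hk : k.val ≠ 0) (hm : 2 * d - 1 ≤ m) :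
    signRecoveryMatrix d m ⟨d + k - 1, by omega⟩ = Pi.single ⟨0, hd⟩ 1 + Pi.single k I := by
  ext l
  simp [signRecoveryMatrix, Pi.single_apply, Fin.ext_iff]
  split_ifs <;> simp <;> omega

lemma mulVec_row_zero (hm : 0 < m) (y : Fin d → ℂ) :
    (signRecoveryMatrix d m *ᵥ y) ⟨0, hm⟩ = y ⟨0, hd⟩ := by
  rw [mulVec_apply, row_apply', row_zero hd hm, single_dotProduct, one_mul]

lemma mulVec_row_real {k : Fin d} (hk : k.val ≠ 0) (hm : 2 * d - 1 ≤ m) (y : Fin d → ℂ) :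
    (signRecoveryMatrix d m *ᵥ y) ⟨k, by omega⟩ = y ⟨0, hd⟩ + y k := by
  rw [mulVec_apply, row_apply', row_real hd hk hm, add_dotProduct, single_dotProduct,
    single_dotProduct, one_mul, one_mul]

lemma mulVec_row_imag {k : Fin d} (hk : k.val ≠ 0) (hm : 2 * d - 1 ≤ m) (y : Fin d → ℂ) :
    (signRecoveryMatrix d m *ᵥ y) ⟨d + k - 1, by omega⟩ = y ⟨0, hd⟩ + I * y k := by
  rw [mulVec_apply, row_apply', row_imag hd hk hm, add_dotProduct, single_dotProduct,
    single_dotProduct, one_mul]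

theorem eq_single_of_forall_csign_mulVec_eq_one (hm : 2 * d - 1 ≤ m) {y : Fin d → ℂ}
    (hy : ∀ j, csign ((signRecoveryMatrix d m *ᵥ y) j) = 1) :
    0 < (y ⟨0, hd⟩).re ∧ (y ⟨0, hd⟩).im = 0 ∧ y = Pi.single ⟨0, hd⟩ (y ⟨0, hd⟩) := by
  have hreal j := csign_eq_one_iff.mp (hy j)
  obtain ⟨hre₀, him₀⟩ : 0 < (y ⟨0, hd⟩).re ∧ (y ⟨0, hd⟩).im = 0 := by
    simpa only [mulVec_row_zero hd (by omega : 0 < m)] using hreal ⟨0, by omega⟩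
  refine ⟨hre₀, him₀, funext fun k => ?_⟩
  rcases eq_or_ne k.val 0 with hk | hk
  · obtain rfl : k = ⟨0, hd⟩ := Fin.ext hk
    rw [Pi.single_eq_same]
  · have him : (y k).im = 0 := by
      simpa [mulVec_row_real hd hk hm, him₀] using (hreal ⟨k, by omega⟩).2
    have hre : (y k).re = 0 := by
      simpa [mulVec_row_imag hd hk hm, him₀] using (hreal ⟨d + k - 1, by omega⟩).2
    rw [Pi.single_eq_of_ne (fun h => hk (Fin.val_eq_of_eq h))]
    exact Complex.ext hre him

end signRecoveryMatrix

open signRecoveryMatrix in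
theorem stmt_10 (d m : ℕ) (hd : 0 < d) (hm : 2 * d - 1 ≤ m)
    (B : Matrix (Fin m) (Fin d) ℂ)
    (hB : ∀ (j : Fin m) (k : Fin d),
      B j k = (if k.val = 0 then 1 else 0)
        + (if 1 ≤ j.val ∧ j.val ≤ d - 1 ∧ k.val = j.val then 1 else 0)
        + (if d ≤ j.val ∧ j.val ≤ 2 * d - 2 ∧ k.val = j.val - d + 1 then Complex.I else 0))
    (e₁ : Fin d → ℂ) (he₁ : e₁ = fun k => if k.val = 0 then 1 else 0) :
    (∀ j, B.mulVec e₁ j ≠ 0) ∧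
    (∀ j, csign (B.mulVec e₁ j) = 1) ∧
    (∀ y : Fin d → ℂ,
      (∀ j, csign (B.mulVec y j) = csign (B.mulVec e₁ j)) →
        0 < (y ⟨0, hd⟩).re ∧ (y ⟨0, hd⟩).im = 0 ∧ y = fun k => y ⟨0, hd⟩ * e₁ k) ∧
    e₁ ∈ Wset B := by
  obtain rfl : B = signRecoveryMatrix d m := Matrix.ext hB
  have he : e₁ = Pi.single ⟨0, hd⟩ 1 := by
    subst he₁
    funext k
    simp [Pi.single_apply, Fin.ext_iff]
  have hBe j : (signRecoveryMatrix d m *ᵥ e₁) j = 1 := by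
    rw [he, mulVec_single_one, col_apply, apply_col_zero]
  have hsign j : csign ((signRecoveryMatrix d m *ᵥ e₁) j) = 1 := by
    rw [hBe, csign_eq_one_iff]
    simp
  have hrigid y (hy : ∀ j, csign ((signRecoveryMatrix d m *ᵥ y) j) =
      csign ((signRecoveryMatrix d m *ᵥ e₁) j)) :=
    eq_single_of_forall_csign_mulVec_eq_one hd hm fun j => (hy j).trans (hsign j)
  have hsingle (c : ℂ) : Pi.single ⟨0, hd⟩ c = fun k => c * e₁ k := by
    funext k
    simp [he, Pi.single_apply]
  refine ⟨fun j => by simp [hBe], hsign, fun y hy => ?_, mem_Wset_of_forall_eq_ofReal_mul fun y hy => ?_⟩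
  · obtain ⟨hre, him, hy⟩ := hrigid y hy
    exact ⟨hre, him, hy.trans (hsingle _)⟩
  · obtain ⟨hre, him, hy⟩ := hrigid y hy
    refine ⟨_, hre, hy.trans ?_⟩
    rw [← hsingle]
    congr 1
    exact Complex.ext (ofReal_re _).symm (by rw [him, ofReal_im])
end

section
/- Every complex number a is uniquely determined by the triple (sign(a), sign(a+1), sign(a+i)). Equivalently, if a, b ∈ ℂ satisfy sign(a) = sign(b), sign(a+1) = sign(b+1), and sign(a+i) = sign(b+i), then a = b. -/
open Complex

lemma csign_eq_zero_iff (z : ℂ) : csign z = 0 ↔ z = 0 := by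
  unfold csign
  split_ifs with hz <;> simp [hz]

lemma norm_mul_csign (z : ℂ) : (‖z‖ : ℂ) * csign z = z := by
  unfold csign
  split_ifs with hz
  · simp [hz]
  · have : (‖z‖ : ℂ) ≠ 0 := by simpa using hz
    field_simp

lemma exists_pos_mul_eq_of_csign_eq {a b : ℂ} (h : csign a = csign b) :
    ∃ r : ℝ, 0 < r ∧ b = r * a := by
  have hzero : a = 0 ↔ b = 0 := by rw [← csign_eq_zero_iff, h, csign_eq_zero_iff]
  by_cases ha : a = 0
  · exact ⟨1, one_pos, by simp [ha, hzero.mp ha]⟩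
  have hb : b ≠ 0 := hzero.not.mp ha
  refine ⟨‖b‖ / ‖a‖, by positivity, ?_⟩
  have hna : (‖a‖ : ℂ) ≠ 0 := by simpa using ha
  calc b = ‖b‖ * csign a := by rw [h, norm_mul_csign]
    _ = ‖b‖ / ‖a‖ * (‖a‖ * csign a) := by field_simp
    _ = _ := by rw [norm_mul_csign]; push_cast; ring

/-- If `a ∉ ℝ` the relation at `1` forces `s = t = 1`; if `a ∉ iℝ` the one at `I` forces `s = u = 1`. -/
lemma ofReal_mul_eq_self_of_dilations {s t u : ℝ} {a : ℂ} (h1 : s * a + 1 = t * (a + 1))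
    (hI : s * a + I = u * (a + I)) : s * a = a := by
  have h1re : s * a.re + 1 = t * (a.re + 1) := by simpa using congrArg re h1
  have h1im : s * a.im = t * a.im := by simpa using congrArg im h1
  have hIre : s * a.re = u * a.re := by simpa using congrArg re hI
  have hIim : s * a.im + 1 = u * (a.im + 1) := by simpa using congrArg im hI
  suffices hs : s = 1 ∨ a = 0 by rcases hs with rfl | rfl <;> simp
  by_cases him : a.im = 0
  · by_cases hre : a.re = 0
    · exact Or.inr (Complex.ext hre him)
    · have hsu : s = u := mul_right_cancel₀ hre hIre
      subst hsu
      exact Or.inl (by linarith)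
  · have hst : s = t := mul_right_cancel₀ him h1im
    subst hst
    exact Or.inl (by linarith)

theorem stmt_13 (a b : ℂ) (h1 : csign a = csign b)
    (h2 : csign (a + 1) = csign (b + 1))
    (h3 : csign (a + Complex.I) = csign (b + Complex.I)) : a = b := by
  obtain ⟨s, -, rfl⟩ := exists_pos_mul_eq_of_csign_eq h1
  obtain ⟨t, -, ht⟩ := exists_pos_mul_eq_of_csign_eq h2
  obtain ⟨u, -, hu⟩ := exists_pos_mul_eq_of_csign_eq h3
  exact (ofReal_mul_eq_self_of_dilations ht hu).symm
end
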